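/- arXiv:2104.06121 — 4 statements merged into one kernel-verified Lean document; each statement's English description precedes it below -/
import Mathlib

section
/- Let X₁, X₂, X₃ be Polish spaces, γ¹² a Borel probability measure on X₁ × X₂ and γ¹³ a Borel probability measure on X₁ × X₃ with equal first marginals: π¹_♯ γ¹² = π¹_♯ γ¹³. Then there exists a Borel probability measure γ on X₁ × X₂ × X₃ such that π¹²_♯ γ = γ¹² and π¹³_♯ γ = γ¹³. -/
/-!
Disintegrate `γ12 = μ ⊗ κ` and `γ13 = μ ⊗ η` over their common first marginal `μ` and glue
them conditionally independently given the first coordinate: `γ = μ ⊗ (κ × η)`.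
-/

open MeasureTheory ProbabilityTheory

namespace MeasureTheory.Measure

variable {α β γ : Type*} [MeasurableSpace α] [MeasurableSpace β] [MeasurableSpace γ]
  (μ : Measure α) [SFinite μ]

lemma map_prodMap_fst_compProd_prod (κ : Kernel α β) [IsSFiniteKernel κ]
    (η : Kernel α γ) [IsMarkovKernel η] :
    (μ ⊗ₘ (κ ×ₖ η)).map (Prod.map id Prod.fst) = μ ⊗ₘ κ := by
  rw [← compProd_map measurable_fst, ← Kernel.fst_eq, Kernel.fst_prod]

lemma map_prodMap_snd_compProd_prod (κ : Kernel α β) [IsMarkovKernel κ]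
    (η : Kernel α γ) [IsSFiniteKernel η] :
    (μ ⊗ₘ (κ ×ₖ η)).map (Prod.map id Prod.snd) = μ ⊗ₘ η := by
  rw [← compProd_map measurable_snd, ← Kernel.snd_eq, Kernel.snd_prod]

end MeasureTheory.Measure

theorem gluing_lemma_general
    {X₁ X₂ X₃ : Type*}
    [MeasurableSpace X₁]
    [TopologicalSpace X₂] [PolishSpace X₂] [MeasurableSpace X₂] [BorelSpace X₂]
    [TopologicalSpace X₃] [PolishSpace X₃] [MeasurableSpace X₃] [BorelSpace X₃]
    (γ12 : Measure (X₁ × X₂)) (γ13 : Measure (X₁ × X₃))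
    [IsProbabilityMeasure γ12] [IsProbabilityMeasure γ13]
    (hmarg : γ12.map Prod.fst = γ13.map Prod.fst) :
    ∃ γ : Measure (X₁ × X₂ × X₃), IsProbabilityMeasure γ ∧
      γ.map (fun p => (p.1, p.2.1)) = γ12 ∧
      γ.map (fun p => (p.1, p.2.2)) = γ13 := by
  have : Nonempty X₂ := (nonempty_of_isProbabilityMeasure γ12).map Prod.snd
  have : Nonempty X₃ := (nonempty_of_isProbabilityMeasure γ13).map Prod.snd
  have hfst : γ13.fst = γ12.fst := hmarg.symm
  refine ⟨γ12.fst ⊗ₘ (γ12.condKernel ×ₖ γ13.condKernel), inferInstance, ?_, ?_⟩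
  · exact (Measure.map_prodMap_fst_compProd_prod ..).trans (γ12.disintegrate _)
  · rw [← hfst]
    exact (Measure.map_prodMap_snd_compProd_prod ..).trans (γ13.disintegrate _)

theorem gluing_lemma
    {X₁ X₂ X₃ : Type*}
    [TopologicalSpace X₁] [PolishSpace X₁] [MeasurableSpace X₁] [BorelSpace X₁]
    [TopologicalSpace X₂] [PolishSpace X₂] [MeasurableSpace X₂] [BorelSpace X₂]
    [TopologicalSpace X₃] [PolishSpace X₃] [MeasurableSpace X₃] [BorelSpace X₃]
    (γ12 : Measure (X₁ × X₂)) (γ13 : Measure (X₁ × X₃))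
    [IsProbabilityMeasure γ12] [IsProbabilityMeasure γ13]
    (hmarg : γ12.map Prod.fst = γ13.map Prod.fst) :
    ∃ γ : Measure (X₁ × X₂ × X₃), IsProbabilityMeasure γ ∧
      γ.map (fun p => (p.1, p.2.1)) = γ12 ∧
      γ.map (fun p => (p.1, p.2.2)) = γ13 :=
  gluing_lemma_general γ12 γ13 hmarg
end

section
/- Let H be a separable Hilbert space and γ a Borel probability measure on H × H with finite second moments. If γ is concentrated on a cyclically monotone set M ⊂ H × H, then γ is an optimal coupling for the quadratic cost between its marginals: ∫ |x₁ - x₂|² dγ = W₂²(π¹_♯γ, π²_♯γ). -/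
/-!
Fix `z₀ ∈ M`. Rockafellar's potential `φ x = sup ⟪x - x₀, y₀⟫ + ∑ₖ ⟪xₖ₋₁ - xₖ, yₖ⟫`, over finite
chains `(x₀, y₀), …, (xₙ, yₙ) = z₀` in `M`, is finite on the first coordinates of `M` by cyclic
monotonicity, and `y` is a subgradient of `φ` at `x` for every `(x, y) ∈ M`. Hence, with `ψ` the
Legendre conjugate of `φ`, `⟪x, y⟫ ≤ φ x + ψ y` wherever both are finite, with equality on `M`.
Affine bounds make `φ` and `ψ` integrable against the marginals, so for any coupling `γ'` of
them `∫ ⟪x, y⟫ ∂γ' ≤ ∫ (φ x + ψ y) ∂γ' = ∫ (φ x + ψ y) ∂γ = ∫ ⟪x, y⟫ ∂γ`. As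
`‖x - y‖² = ‖x‖² - 2 ⟪x, y⟫ + ‖y‖²` and the second moments depend only on the marginals, `γ`
minimises the quadratic cost.
-/


open MeasureTheory Filter Topology ENNReal RealInnerProductSpace

/-- The set of couplings (transport plans) between two measures. -/
def couplings {X : Type*} [MeasurableSpace X] (μ ν : Measure X) :
    Set (Measure (X × X)) :=
  {γ | γ.map Prod.fst = μ ∧ γ.map Prod.snd = ν}

/-- The squared 2-Wasserstein distance. -/
noncomputable def W2Sq {X : Type*} [MeasurableSpace X] [PseudoMetricSpace X]
    (μ ν : Measure X) : ℝ≥0∞ :=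
  ⨅ γ ∈ couplings μ ν, ∫⁻ q, ENNReal.ofReal (dist q.1 q.2 ^ 2) ∂γ

/-- A subset of `H × H` is cyclically monotone. -/
def CyclicallyMonotoneSet {H : Type*} [NormedAddCommGroup H]
    [InnerProductSpace ℝ H] (M : Set (H × H)) : Prop :=
  ∀ (N : ℕ) (z : ℕ → H × H), (∀ k ≤ N, z k ∈ M) → z 0 = z N →
    0 ≤ ∑ k ∈ Finset.Icc 1 N, ⟪(z k).1 - (z (k - 1)).1, (z k).2⟫

noncomputable section Rockafellar

variable {H : Type*} [NormedAddCommGroup H] [InnerProductSpace ℝ H]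

def cyclicSum (N : ℕ) (z : ℕ → H × H) : ℝ :=
  ∑ k ∈ Finset.Icc 1 N, ⟪(z k).1 - (z (k - 1)).1, (z k).2⟫

def seqCons {α : Type*} (a : α) (z : ℕ → α) : ℕ → α
  | 0 => a
  | k + 1 => z k

lemma cyclicSum_seqCons (N : ℕ) (p : H × H) (z : ℕ → H × H) :
    cyclicSum (N + 1) (seqCons p z) = ⟪(z 0).1 - p.1, (z 0).2⟫ + cyclicSum N z := by
  induction N with
  | zero => simp [cyclicSum, seqCons]
  | succ N ih =>
    rw [cyclicSum, Finset.sum_Icc_succ_top (by omega), ← cyclicSum, ih, cyclicSum, cyclicSum,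
      Finset.sum_Icc_succ_top (by omega)]
    simp [seqCons, add_assoc]

structure ChainIn (M : Set (H × H)) (z₀ : H × H) where
  len : ℕ
  pt : ℕ → H × H
  pt_len : pt len = z₀
  pt_mem : ∀ k ≤ len, pt k ∈ M

namespace ChainIn

variable {M : Set (H × H)} {z₀ : H × H}

def single (hz₀ : z₀ ∈ M) : ChainIn M z₀ := ⟨0, fun _ ↦ z₀, rfl, fun _ _ ↦ hz₀⟩

def cons (c : ChainIn M z₀) {p : H × H} (hp : p ∈ M) : ChainIn M z₀ where
  len := c.len + 1
  pt := seqCons p c.pt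
  pt_len := c.pt_len
  pt_mem
    | 0, _ => hp
    | k + 1, hk => c.pt_mem k (by omega)

/-- Rockafellar's affine function `x ↦ ⟪x - x₀, y₀⟫ + ∑ₖ ⟪xₖ₋₁ - xₖ, yₖ⟫` of the chain
`(x₀, y₀), …, (x_len, y_len) = z₀`. -/
def value (c : ChainIn M z₀) (x : H) : ℝ :=
  ⟪x - (c.pt 0).1, (c.pt 0).2⟫ - cyclicSum c.len c.pt

lemma value_cons (c : ChainIn M z₀) {p : H × H} (hp : p ∈ M) (x : H) :
    (c.cons hp).value x = ⟪x - p.1, p.2⟫ + c.value p.1 := by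
  simp only [value, cons, cyclicSum_seqCons, seqCons]
  rw [← neg_sub p.1 (c.pt 0).1, inner_neg_left]
  ring

lemma value_base_nonpos (hM : CyclicallyMonotoneSet M) (hz₀ : z₀ ∈ M) (c : ChainIn M z₀) :
    c.value z₀.1 ≤ 0 := by
  -- prepending `z₀` closes the chain into a cycle
  have hcycle : 0 ≤ cyclicSum (c.len + 1) (seqCons z₀ c.pt) :=
    hM _ _ (c.cons hz₀).pt_mem (c.cons hz₀).pt_len.symm
  have h := c.value_cons hz₀ z₀.1
  simp only [value, cons, seqCons, sub_self, inner_zero_left, zero_sub, zero_add] at h ⊢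
  linarith

lemma continuous_value (c : ChainIn M z₀) : Continuous c.value := by
  unfold value; fun_prop

end ChainIn

def rockafellarPotential (M : Set (H × H)) (z₀ : H × H) (x : H) : EReal :=
  ⨆ c : ChainIn M z₀, (c.value x : EReal)

variable {M : Set (H × H)} {z₀ p : H × H} {x : H}

lemma value_le_rockafellarPotential (c : ChainIn M z₀) (x : H) :
    (c.value x : EReal) ≤ rockafellarPotential M z₀ x :=
  le_iSup (fun c : ChainIn M z₀ ↦ (c.value x : EReal)) c

lemma lowerSemicontinuous_rockafellarPotential :
    LowerSemicontinuous (rockafellarPotential M z₀) :=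
  lowerSemicontinuous_iSup fun c ↦
    (continuous_coe_real_ereal.comp c.continuous_value).lowerSemicontinuous

lemma rockafellarPotential_ne_bot (hz₀ : z₀ ∈ M) (x : H) : rockafellarPotential M z₀ x ≠ ⊥ :=
  ne_bot_of_le_ne_bot (EReal.coe_ne_bot _) (value_le_rockafellarPotential (.single hz₀) x)

lemma rockafellarPotential_ne_top (hM : CyclicallyMonotoneSet M) (hz₀ : z₀ ∈ M) (hp : p ∈ M) :
    rockafellarPotential M z₀ p.1 ≠ ⊤ := by
  refine ne_top_of_le_ne_top (EReal.coe_ne_top ⟪p.1 - z₀.1, p.2⟫) (iSup_le fun c ↦ ?_)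
  have := (c.cons hp).value_base_nonpos hM hz₀
  rw [c.value_cons hp, ← neg_sub p.1, inner_neg_left] at this
  exact EReal.coe_le_coe_iff.2 (by linarith)

lemma toReal_rockafellarPotential_add_inner_le (hz₀ : z₀ ∈ M) (hp : p ∈ M)
    (hx : rockafellarPotential M z₀ x ≠ ⊤) :
    (rockafellarPotential M z₀ p.1).toReal + ⟪x - p.1, p.2⟫ ≤
      (rockafellarPotential M z₀ x).toReal := by
  have hle : rockafellarPotential M z₀ p.1 ≤
      (((rockafellarPotential M z₀ x).toReal - ⟪x - p.1, p.2⟫ : ℝ) : EReal) := by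
    refine iSup_le fun c ↦ EReal.coe_le_coe_iff.2 ?_
    have := (value_le_rockafellarPotential (c.cons hp) x).trans (EReal.le_coe_toReal hx)
    rw [EReal.coe_le_coe_iff, c.value_cons] at this
    linarith
  have := (EReal.coe_toReal_le (rockafellarPotential_ne_bot hz₀ _)).trans hle
  rw [EReal.coe_le_coe_iff] at this
  linarith

def conjugateOn (A : Set H) (f : H → ℝ) (y : H) : EReal :=
  ⨆ x : A, ((⟪(x : H), y⟫ - f x : ℝ) : EReal)

variable {A : Set H} {f : H → ℝ} {y : H}

lemma inner_sub_le_conjugateOn (hx : x ∈ A) (y : H) :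
    ((⟪x, y⟫ - f x : ℝ) : EReal) ≤ conjugateOn A f y :=
  le_iSup (fun x : A ↦ ((⟪(x : H), y⟫ - f x : ℝ) : EReal)) ⟨x, hx⟩

lemma conjugateOn_eq_of_subgradient (hx : x ∈ A) (hsub : ∀ x' ∈ A, f x + ⟪x' - x, y⟫ ≤ f x') :
    conjugateOn A f y = ((⟪x, y⟫ - f x : ℝ) : EReal) := by
  refine le_antisymm (iSup_le fun x' ↦ EReal.coe_le_coe_iff.2 ?_) (inner_sub_le_conjugateOn hx y)
  have := hsub x' x'.2
  rw [inner_sub_left] at this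
  linarith

lemma lowerSemicontinuous_conjugateOn : LowerSemicontinuous (conjugateOn A f) :=
  lowerSemicontinuous_iSup fun _ ↦
    (continuous_coe_real_ereal.comp (by fun_prop)).lowerSemicontinuous

/-- Rockafellar's theorem, as a pair of Kantorovich potentials for the cost `-⟪x, y⟫`. -/
theorem CyclicallyMonotoneSet.exists_potentials [MeasurableSpace H] [OpensMeasurableSpace H]
    (hM : CyclicallyMonotoneSet M) (hne : M.Nonempty) :
    ∃ (f g : H → ℝ) (A B : Set H), Measurable f ∧ Measurable g ∧
      MeasurableSet A ∧ MeasurableSet B ∧ (∀ x ∈ A, ∀ y ∈ B, ⟪x, y⟫ ≤ f x + g y) ∧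
      ∀ p ∈ M, p.1 ∈ A ∧ p.2 ∈ B ∧ f p.1 + g p.2 = ⟪p.1, p.2⟫ := by
  obtain ⟨z₀, hz₀⟩ := hne
  set φ := rockafellarPotential M z₀
  set A := {x | φ x ≠ ⊤}
  set f := fun x ↦ (φ x).toReal
  set ψ := conjugateOn A f
  have hφ : Measurable φ := lowerSemicontinuous_rockafellarPotential.measurable
  have hψ : Measurable ψ := lowerSemicontinuous_conjugateOn.measurable
  have hψM : ∀ p ∈ M, ψ p.2 = ((⟪p.1, p.2⟫ - f p.1 : ℝ) : EReal) := fun p hp ↦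
    conjugateOn_eq_of_subgradient (rockafellarPotential_ne_top hM hz₀ hp) fun _ hx ↦
      toReal_rockafellarPotential_add_inner_le hz₀ hp hx
  refine ⟨f, fun y ↦ (ψ y).toReal, A, {y | ψ y ≠ ⊤}, hφ.ereal_toReal, hψ.ereal_toReal,
    hφ (measurableSet_singleton ⊤).compl, hψ (measurableSet_singleton ⊤).compl,
    fun x hx y hy ↦ ?_, fun p hp ↦ ⟨rockafellarPotential_ne_top hM hz₀ hp, ?_⟩⟩
  · have := (inner_sub_le_conjugateOn hx y).trans (EReal.le_coe_toReal hy)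
    rw [EReal.coe_le_coe_iff] at this
    linarith
  · simp only [Set.mem_ofPred_eq, hψM p hp, EReal.toReal_coe, ne_eq, EReal.coe_ne_top,
      not_false_eq_true, true_and]
    ring

end Rockafellar

section Couplings

variable {α E : Type*} [MeasurableSpace α] [NormedAddCommGroup E] {μ ν : Measure α}

lemma MeasureTheory.MemLp.of_map_eq [MeasurableSpace E] [OpensMeasurableSpace E]
    [SecondCountableTopology E] {φ : α → E} (hφ : Measurable φ) (h : ν.map φ = μ.map φ)
    {p : ℝ≥0∞} (hmem : MemLp φ p μ) : MemLp φ p ν := by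
  have hid : ∀ ρ : Measure α, MemLp id p (ρ.map φ) ↔ MemLp φ p ρ := fun ρ ↦
    memLp_map_measure_iff aestronglyMeasurable_id hφ.aemeasurable
  rw [← hid, h, hid]
  exact hmem

lemma integral_comp_of_map_eq {β : Type*} [MeasurableSpace β] [NormedSpace ℝ E] {φ : α → β}
    (hφ : Measurable φ) (h : ν.map φ = μ.map φ) {g : β → E}
    (hg : AEStronglyMeasurable g (μ.map φ)) :
    ∫ a, g (φ a) ∂ν = ∫ a, g (φ a) ∂μ := by
  rw [← integral_map hφ.aemeasurable (h ▸ hg), h, integral_map hφ.aemeasurable hg]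

variable {X Y : Type*} [MeasurableSpace X] [MeasurableSpace Y]

lemma memLp_two_of_lintegral_lt_top [NormedAddCommGroup X] [NormedAddCommGroup Y]
    [BorelSpace X] [BorelSpace Y] [SecondCountableTopology X] [SecondCountableTopology Y]
    {γ : Measure (X × Y)}
    (hmom : ∫⁻ q, ENNReal.ofReal (‖q.1‖ ^ 2 + ‖q.2‖ ^ 2) ∂γ < ⊤) :
    MemLp Prod.fst 2 γ ∧ MemLp Prod.snd 2 γ := by
  have hint : Integrable (fun q : X × Y ↦ ‖q.1‖ ^ 2 + ‖q.2‖ ^ 2) γ :=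
    ⟨by fun_prop, (hasFiniteIntegral_iff_ofReal (ae_of_all _ fun q ↦ by positivity)).2 hmom⟩
  refine ⟨(memLp_two_iff_integrable_sq_norm measurable_fst.aestronglyMeasurable).2
      (hint.mono' (by fun_prop) (ae_of_all _ fun q ↦ ?_)),
    (memLp_two_iff_integrable_sq_norm measurable_snd.aestronglyMeasurable).2
      (hint.mono' (by fun_prop) (ae_of_all _ fun q ↦ ?_))⟩ <;>
  rw [Real.norm_of_nonneg (by positivity)] <;> nlinarith [sq_nonneg ‖q.1‖, sq_nonneg ‖q.2‖]

/-- Weak Kantorovich duality. -/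
theorem integral_le_of_potentials {γ γ' : Measure (X × Y)}
    (hfst : γ'.map Prod.fst = γ.map Prod.fst) (hsnd : γ'.map Prod.snd = γ.map Prod.snd)
    {c : X × Y → ℝ} {f : X → ℝ} {g : Y → ℝ} {A : Set X} {B : Set Y} (hc : Integrable c γ')
    (hf : Integrable f (γ.map Prod.fst)) (hg : Integrable g (γ.map Prod.snd))
    (hA : ∀ᵐ x ∂γ.map Prod.fst, x ∈ A) (hB : ∀ᵐ y ∂γ.map Prod.snd, y ∈ B)
    (hle : ∀ x ∈ A, ∀ y ∈ B, c (x, y) ≤ f x + g y) (heq : ∀ᵐ q ∂γ, c q = f q.1 + g q.2) :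
    ∫ q, c q ∂γ' ≤ ∫ q, c q ∂γ := by
  have hf₀ : Integrable (fun q ↦ f q.1) γ := hf.comp_aemeasurable measurable_fst.aemeasurable
  have hg₀ : Integrable (fun q ↦ g q.2) γ := hg.comp_aemeasurable measurable_snd.aemeasurable
  have hf' : Integrable (fun q ↦ f q.1) γ' :=
    (hfst ▸ hf).comp_aemeasurable measurable_fst.aemeasurable
  have hg' : Integrable (fun q ↦ g q.2) γ' :=
    (hsnd ▸ hg).comp_aemeasurable measurable_snd.aemeasurable
  have hle' : ∀ᵐ q ∂γ', c q ≤ f q.1 + g q.2 := by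
    filter_upwards [ae_of_ae_map measurable_fst.aemeasurable (hfst ▸ hA),
      ae_of_ae_map measurable_snd.aemeasurable (hsnd ▸ hB)] with q hq₁ hq₂
    exact hle _ hq₁ _ hq₂
  calc ∫ q, c q ∂γ' ≤ ∫ q, f q.1 + g q.2 ∂γ' := integral_mono_ae hc (hf'.add hg') hle'
    _ = ∫ q, f q.1 + g q.2 ∂γ := by
      rw [integral_add hf' hg', integral_add hf₀ hg₀,
        integral_comp_of_map_eq measurable_fst hfst hf.1,
        integral_comp_of_map_eq measurable_snd hsnd hg.1]
    _ = ∫ q, c q ∂γ := integral_congr_ae (heq.mono fun _ h ↦ h.symm)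

end Couplings

section InnerProduct

variable {H : Type*} [NormedAddCommGroup H] [InnerProductSpace ℝ H]

lemma MeasureTheory.MemLp.integrable_inner {α : Type*} [MeasurableSpace α] {μ : Measure α}
    {u v : α → H} (hu : MemLp u 2 μ) (hv : MemLp v 2 μ) : Integrable (fun a ↦ ⟪u a, v a⟫) μ :=
  (L2.integrable_inner (𝕜 := ℝ) hu.toLp hv.toLp).congr <| by
    filter_upwards [hu.coeFn_toLp, hv.coeFn_toLp] with a hua hva
    rw [hua, hva]

lemma dist_sq_eq_norm_sq_sub_inner (x y : H) :
    dist x y ^ 2 = ‖x‖ ^ 2 - 2 * ⟪x, y⟫ + ‖y‖ ^ 2 := by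
  rw [dist_eq_norm, norm_sub_sq_real]

variable [MeasurableSpace H] {γ γ' : Measure (H × H)}

lemma integrable_dist_sq (hx : MemLp Prod.fst 2 γ) (hy : MemLp Prod.snd 2 γ) :
    Integrable (fun q : H × H ↦ dist q.1 q.2 ^ 2) γ := by
  simp_rw [dist_sq_eq_norm_sq_sub_inner]
  exact (((memLp_two_iff_integrable_sq_norm hx.1).1 hx).sub
    ((hx.integrable_inner hy).const_mul 2)).add ((memLp_two_iff_integrable_sq_norm hy.1).1 hy)

lemma integral_dist_sq (hx : MemLp Prod.fst 2 γ) (hy : MemLp Prod.snd 2 γ) :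
    ∫ q, dist q.1 q.2 ^ 2 ∂γ =
      ∫ q, ‖q.1‖ ^ 2 ∂γ - 2 * ∫ q, ⟪q.1, q.2⟫ ∂γ + ∫ q, ‖q.2‖ ^ 2 ∂γ := by
  have hx₂ := (memLp_two_iff_integrable_sq_norm hx.1).1 hx
  have hy₂ := (memLp_two_iff_integrable_sq_norm hy.1).1 hy
  have hxy := (hx.integrable_inner hy).const_mul 2
  have hsub : Integrable (fun q : H × H ↦ ‖q.1‖ ^ 2 - 2 * ⟪q.1, q.2⟫) γ := hx₂.sub hxy
  simp_rw [dist_sq_eq_norm_sq_sub_inner]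
  rw [integral_add hsub hy₂, integral_sub hx₂ hxy, integral_const_mul]

lemma lintegral_ofReal_dist_sq (hx : MemLp Prod.fst 2 γ) (hy : MemLp Prod.snd 2 γ) :
    ∫⁻ q, ENNReal.ofReal (dist q.1 q.2 ^ 2) ∂γ = ENNReal.ofReal (∫ q, dist q.1 q.2 ^ 2 ∂γ) :=
  (ofReal_integral_eq_lintegral_ofReal (integrable_dist_sq hx hy)
    (ae_of_all _ fun _ ↦ by positivity)).symm

lemma integrable_potentials [IsFiniteMeasure γ] (hx : MemLp Prod.fst 2 γ)
    (hy : MemLp Prod.snd 2 γ) {M : Set (H × H)} (hconc : ∀ᵐ q ∂γ, q ∈ M) {z₀ : H × H}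
    (hz₀ : z₀ ∈ M) {f g : H → ℝ} {A B : Set H} (hf : Measurable f) (hg : Measurable g)
    (hle : ∀ x ∈ A, ∀ y ∈ B, ⟪x, y⟫ ≤ f x + g y)
    (hfg : ∀ p ∈ M, p.1 ∈ A ∧ p.2 ∈ B ∧ f p.1 + g p.2 = ⟪p.1, p.2⟫) :
    Integrable f (γ.map Prod.fst) ∧ Integrable g (γ.map Prod.snd) := by
  obtain ⟨hx₀, hy₀, -⟩ := hfg z₀ hz₀
  have hI := hx.integrable_inner hy
  have hI₁ : Integrable (fun q : H × H ↦ ⟪q.1, z₀.2⟫) γ := (hx.integrable one_le_two).inner_const _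
  have hI₂ : Integrable (fun q : H × H ↦ ⟪z₀.1, q.2⟫) γ := (hy.integrable one_le_two).const_inner _
  rw [integrable_map_measure hf.aestronglyMeasurable measurable_fst.aemeasurable,
    integrable_map_measure hg.aestronglyMeasurable measurable_snd.aemeasurable]
  -- On `M` both potentials are squeezed between affine bounds: test `hle` against `z₀`.
  constructor
  · refine integrable_of_le_of_le (f := fun q : H × H ↦ f q.1)
      (g₁ := fun q ↦ ⟪q.1, z₀.2⟫ - g z₀.2) (g₂ := fun q ↦ ⟪q.1, q.2⟫ - ⟪z₀.1, q.2⟫ + f z₀.1)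
      (hf.comp measurable_fst).aestronglyMeasurable ?_ ?_
      (hI₁.sub (integrable_const _)) ((hI.sub hI₂).add (integrable_const _)) <;>
    filter_upwards [hconc] with q hq <;> obtain ⟨hq₁, hq₂, hq⟩ := hfg q hq
    · linarith [hle _ hq₁ _ hy₀]
    · linarith [hle _ hx₀ _ hq₂]
  · refine integrable_of_le_of_le (f := fun q : H × H ↦ g q.2)
      (g₁ := fun q ↦ ⟪z₀.1, q.2⟫ - f z₀.1) (g₂ := fun q ↦ ⟪q.1, q.2⟫ - ⟪q.1, z₀.2⟫ + g z₀.2)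
      (hg.comp measurable_snd).aestronglyMeasurable ?_ ?_
      (hI₂.sub (integrable_const _)) ((hI.sub hI₁).add (integrable_const _)) <;>
    filter_upwards [hconc] with q hq <;> obtain ⟨hq₁, hq₂, hq⟩ := hfg q hq
    · linarith [hle _ hx₀ _ hq₂]
    · linarith [hle _ hq₁ _ hy₀]

variable [BorelSpace H] [SecondCountableTopology H] in
theorem CyclicallyMonotoneSet.integral_inner_le [IsFiniteMeasure γ] [NeZero γ]
    {M : Set (H × H)} (hM : CyclicallyMonotoneSet M) (hconc : ∀ᵐ q ∂γ, q ∈ M)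
    (hx : MemLp Prod.fst 2 γ) (hy : MemLp Prod.snd 2 γ)
    (hfst : γ'.map Prod.fst = γ.map Prod.fst) (hsnd : γ'.map Prod.snd = γ.map Prod.snd) :
    ∫ q, ⟪q.1, q.2⟫ ∂γ' ≤ ∫ q, ⟪q.1, q.2⟫ ∂γ := by
  obtain ⟨z₀, hz₀⟩ := hconc.exists
  obtain ⟨f, g, A, B, hf, hg, hA, hB, hle, hfg⟩ := hM.exists_potentials ⟨z₀, hz₀⟩
  obtain ⟨hfi, hgi⟩ := integrable_potentials hx hy hconc hz₀ hf hg hle hfg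
  have hI' :=
    (hx.of_map_eq measurable_fst hfst).integrable_inner (hy.of_map_eq measurable_snd hsnd)
  refine integral_le_of_potentials hfst hsnd hI' hfi hgi ?_ ?_ hle
    (hconc.mono fun q hq ↦ (hfg q hq).2.2.symm)
  · exact (ae_map_iff measurable_fst.aemeasurable hA).2 (hconc.mono fun q hq ↦ (hfg q hq).1)
  · exact (ae_map_iff measurable_snd.aemeasurable hB).2 (hconc.mono fun q hq ↦ (hfg q hq).2.1)

end InnerProduct

theorem optimal_of_cyclically_monotone
    {H : Type*} [NormedAddCommGroup H] [InnerProductSpace ℝ H]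
    [TopologicalSpace.SeparableSpace H] [MeasurableSpace H] [BorelSpace H]
    (γ : Measure (H × H)) [IsProbabilityMeasure γ]
    (hmom : ∫⁻ q, ENNReal.ofReal (‖q.1‖ ^ 2 + ‖q.2‖ ^ 2) ∂γ < ⊤)
    (M : Set (H × H)) (hM : CyclicallyMonotoneSet M)
    (hconc : γ Mᶜ = 0) :
    ∫⁻ q, ENNReal.ofReal (dist q.1 q.2 ^ 2) ∂γ
      = W2Sq (γ.map Prod.fst) (γ.map Prod.snd) := by
  obtain ⟨hx, hy⟩ := memLp_two_of_lintegral_lt_top hmom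
  refine le_antisymm (le_iInf₂ fun γ' ⟨hfst, hsnd⟩ ↦ ?_) (iInf₂_le γ ⟨rfl, rfl⟩)
  have hx' := hx.of_map_eq measurable_fst hfst
  have hy' := hy.of_map_eq measurable_snd hsnd
  rw [lintegral_ofReal_dist_sq hx hy, lintegral_ofReal_dist_sq hx' hy']
  refine ENNReal.ofReal_le_ofReal ?_
  rw [integral_dist_sq hx hy, integral_dist_sq hx' hy',
    integral_comp_of_map_eq measurable_fst hfst (g := fun x ↦ ‖x‖ ^ 2) (by fun_prop),
    integral_comp_of_map_eq measurable_snd hsnd (g := fun x ↦ ‖x‖ ^ 2) (by fun_prop)]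
  linarith [hM.integral_inner_le (mem_ae_iff.2 hconc) hx hy hfst hsnd]
end

section
/- Let 𝕏 be a separable Banach space and 𝕐 a reflexive separable Banach space, p ∈ [1,∞), q ∈ (1,∞). The space C_{pq}^{sw}(𝕏 × 𝕐) of functions ζ : 𝕏 × 𝕐 → ℝ that are sequentially continuous with respect to the strong topology on 𝕏 and the weak topology on 𝕐, and satisfy: for every ε > 0 there exists A_ε ≥ 0 with |ζ(x,y)| ≤ A_ε(1 + ‖x‖^p) + ε‖y‖^q, is a Banach space under the norm ‖ζ‖ = sup_{(x,y)} |ζ(x,y)| / (1 + ‖x‖^p + ‖y‖^q). -/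
open Filter Topology

/-- Sequential convergence with respect to the weak topology of a Banach space. -/
def WeakSeqTendsto {Y : Type*} [NormedAddCommGroup Y] [NormedSpace ℝ Y]
    (y : ℕ → Y) (y₀ : Y) : Prop :=
  ∀ f : Y →L[ℝ] ℝ, Tendsto (fun k => f (y k)) atTop (𝓝 (f y₀))

/-- Membership in the space `C_{pq}^{sw}(𝕏 × 𝕐)`: sequential continuity w.r.t.
the strong topology on `𝕏` and weak topology on `𝕐`, together with the
`p`-`q` growth condition. -/
def MemCsw {X Y : Type*} [NormedAddCommGroup X] [NormedSpace ℝ X]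
    [NormedAddCommGroup Y] [NormedSpace ℝ Y] (p q : ℝ) (ζ : X × Y → ℝ) : Prop :=
  (∀ (x : ℕ → X) (x₀ : X) (y : ℕ → Y) (y₀ : Y),
      Tendsto x atTop (𝓝 x₀) → WeakSeqTendsto y y₀ →
      Tendsto (fun k => ζ (x k, y k)) atTop (𝓝 (ζ (x₀, y₀)))) ∧
  (∀ ε : ℝ, 0 < ε → ∃ A : ℝ, 0 ≤ A ∧
      ∀ x : X, ∀ y : Y, |ζ (x, y)| ≤ A * (1 + ‖x‖ ^ p) + ε * ‖y‖ ^ q)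

/-- The natural norm on `C_{pq}^{sw}(𝕏 × 𝕐)`. -/
noncomputable def CswNorm {X Y : Type*} [NormedAddCommGroup X]
    [NormedAddCommGroup Y] (p q : ℝ) (ζ : X × Y → ℝ) : ℝ :=
  ⨆ z : X × Y, |ζ z| / (1 + ‖z.1‖ ^ p + ‖z.2‖ ^ q)

/-!
Dividing by the weight `1 + ‖x‖ ^ p + ‖y‖ ^ q` turns `CswNorm` into a sup norm, so a Cauchy
sequence has a pointwise limit to which it converges uniformly after division by the weight.
Along a strongly convergent `x k` and a weakly convergent `y k` (bounded by Banach–Steinhaus)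
the weight stays bounded, so there the convergence is uniform and sequential continuity
passes to the limit by interchanging the two limits. The growth condition passes to the limit
by splitting `ε`.
-/

section WeightedSup

variable {α : Type*} {w : α → ℝ} {f : α → ℝ} {C : ℝ}

lemma weightedSup_le (hw : ∀ z, 0 < w z) (hC : 0 ≤ C) (h : ∀ z, |f z| ≤ C * w z) :
    ⨆ z, |f z| / w z ≤ C :=
  Real.iSup_le (fun z => (div_le_iff₀ (hw z)).2 (h z)) hC

lemma abs_le_weightedSup_mul (hw : ∀ z, 0 < w z) (h : ∀ z, |f z| ≤ C * w z) (z : α) :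
    |f z| ≤ (⨆ z, |f z| / w z) * w z := by
  have hbdd : BddAbove (Set.range fun z => |f z| / w z) :=
    ⟨C, Set.forall_mem_range.2 fun z => (div_le_iff₀ (hw z)).2 (h z)⟩
  exact (div_le_iff₀ (hw z)).1 (le_ciSup hbdd z)

end WeightedSup

section WeightedUniformLimit

variable {α : Type*} {w : α → ℝ} {f : ℕ → α → ℝ} {g : α → ℝ}

lemma exists_weighted_uniform_limit
    (hf : ∀ ε > 0, ∃ N, ∀ m ≥ N, ∀ n ≥ N, ∀ z, |f m z - f n z| ≤ ε * w z) :
    ∃ g : α → ℝ, ∀ ε > 0, ∀ᶠ n in atTop, ∀ z, |f n z - g z| ≤ ε * w z := by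
  have hcauchy : ∀ z, CauchySeq fun n => f n z := by
    intro z
    refine Metric.cauchySeq_iff'.2 fun ε hε => ?_
    have hδ : 0 < ε / (2 * (|w z| + 1)) := by positivity
    obtain ⟨N, hN⟩ := hf _ hδ
    refine ⟨N, fun n hn => ?_⟩
    calc dist (f n z) (f N z) = |f n z - f N z| := Real.dist_eq _ _
      _ ≤ ε / (2 * (|w z| + 1)) * w z := hN n hn N le_rfl z
      _ ≤ ε / (2 * (|w z| + 1)) * (|w z| + 1) := by gcongr; linarith [le_abs_self (w z)]
      _ < ε := by field_simp; linarith
  choose g hg using fun z => cauchySeq_tendsto_of_complete (hcauchy z)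
  refine ⟨g, fun ε hε => eventually_atTop.2 ?_⟩
  obtain ⟨N, hN⟩ := hf ε hε
  refine ⟨N, fun n hn z => le_of_tendsto ((tendsto_const_nhds.sub (hg z)).abs) ?_⟩
  filter_upwards [eventually_ge_atTop N] with m hm using hN n hn m hm z

lemma tendstoUniformly_comp_of_weighted {β : Type*} {s : β → α} {B : ℝ}
    (hfg : ∀ ε > 0, ∀ᶠ n in atTop, ∀ z, |f n z - g z| ≤ ε * w z) (hB : ∀ b, w (s b) ≤ B) :
    TendstoUniformly (fun n b => f n (s b)) (fun b => g (s b)) atTop := by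
  refine Metric.tendstoUniformly_iff.2 fun ε hε => ?_
  filter_upwards [hfg (ε / (|B| + 1)) (by positivity)] with n hn b
  calc dist (g (s b)) (f n (s b)) = |f n (s b) - g (s b)| := by rw [Real.dist_eq, abs_sub_comm]
    _ ≤ ε / (|B| + 1) * w (s b) := hn (s b)
    _ ≤ ε / (|B| + 1) * |B| := by gcongr; exact (hB b).trans (le_abs_self B)
    _ < ε := by
      rw [div_mul_eq_mul_div, div_lt_iff₀ (by positivity)]
      nlinarith

lemma tendsto_apply_of_weighted
    (hfg : ∀ ε > 0, ∀ᶠ n in atTop, ∀ z, |f n z - g z| ≤ ε * w z) (z : α) :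
    Tendsto (fun n => f n z) atTop (𝓝 (g z)) :=
  (tendstoUniformly_comp_of_weighted (s := fun _ : Unit => z) hfg fun _ => le_rfl).tendsto_at ()

lemma tendsto_comp_of_weighted {z : ℕ → α} {z₀ : α} {B : ℝ}
    (hfg : ∀ ε > 0, ∀ᶠ n in atTop, ∀ z, |f n z - g z| ≤ ε * w z) (hB : ∀ k, w (z k) ≤ B)
    (hf : ∀ n, Tendsto (fun k => f n (z k)) atTop (𝓝 (f n z₀))) :
    Tendsto (fun k => g (z k)) atTop (𝓝 (g z₀)) :=
  (tendstoUniformly_comp_of_weighted hfg hB).tendsto_of_eventually_tendsto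
    (Eventually.of_forall hf) (tendsto_apply_of_weighted hfg z₀)

end WeightedUniformLimit

lemma WeakSeqTendsto.bddAbove_range_norm {Y : Type*} [NormedAddCommGroup Y] [NormedSpace ℝ Y]
    {y : ℕ → Y} {y₀ : Y} (h : WeakSeqTendsto y y₀) : BddAbove (Set.range fun k => ‖y k‖) := by
  let ι := NormedSpace.inclusionInDoubleDualLi (E := Y) ℝ
  have hpt : ∀ f : Y →L[ℝ] ℝ, ∃ C, ∀ k, ‖ι (y k) f‖ ≤ C := fun f =>
    let ⟨C, hC⟩ := (h f).norm.bddAbove_range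
    ⟨C, fun k => hC (Set.mem_range_self k)⟩
  obtain ⟨M, hM⟩ := banach_steinhaus hpt
  exact ⟨M, Set.forall_mem_range.2 fun k => (ι.norm_map (y k)).symm.trans_le (hM k)⟩

section Csw

variable {X Y : Type*} [NormedAddCommGroup X] [NormedAddCommGroup Y] {p q : ℝ}

lemma csw_weight_pos (p q : ℝ) (z : X × Y) : 0 < 1 + ‖z.1‖ ^ p + ‖z.2‖ ^ q := by
  have := Real.rpow_nonneg (norm_nonneg z.1) p
  have := Real.rpow_nonneg (norm_nonneg z.2) q
  linarith

lemma exists_csw_weight_le (hp : 0 ≤ p) (hq : 0 ≤ q) {x : ℕ → X} {y : ℕ → Y}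
    (hx : BddAbove (Set.range fun k => ‖x k‖)) (hy : BddAbove (Set.range fun k => ‖y k‖)) :
    ∃ B, ∀ k, 1 + ‖x k‖ ^ p + ‖y k‖ ^ q ≤ B := by
  obtain ⟨R, hR⟩ := hx
  obtain ⟨M, hM⟩ := hy
  refine ⟨1 + R ^ p + M ^ q, fun k => ?_⟩
  gcongr
  exacts [hR ⟨k, rfl⟩, hM ⟨k, rfl⟩]

lemma tendsto_CswNorm_sub_of_weighted_uniform {ζ : ℕ → X × Y → ℝ} {ζlim : X × Y → ℝ}
    (hlim : ∀ ε > 0, ∀ᶠ n in atTop, ∀ z,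
      |ζ n z - ζlim z| ≤ ε * (1 + ‖z.1‖ ^ p + ‖z.2‖ ^ q)) :
    Tendsto (fun n => CswNorm p q fun z => ζ n z - ζlim z) atTop (𝓝 0) := by
  refine tendsto_order.2 ⟨fun a ha => Eventually.of_forall fun n => ha.trans_le ?_,
    fun a ha => (hlim (a / 2) (half_pos ha)).mono fun n hn => ?_⟩
  · exact Real.iSup_nonneg fun z => div_nonneg (abs_nonneg _) (csw_weight_pos p q z).le
  · exact (weightedSup_le (csw_weight_pos p q) (half_pos ha).le hn).trans_lt (half_lt_self ha)

variable [NormedSpace ℝ X] [NormedSpace ℝ Y] {ζ ζ₁ ζ₂ : X × Y → ℝ}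

lemma MemCsw.add (h₁ : MemCsw p q ζ₁) (h₂ : MemCsw p q ζ₂) :
    MemCsw p q fun z => ζ₁ z + ζ₂ z := by
  refine ⟨fun x x₀ y y₀ hx hy => (h₁.1 x x₀ y y₀ hx hy).add (h₂.1 x x₀ y y₀ hx hy),
    fun ε hε => ?_⟩
  obtain ⟨A₁, hA₁, hb₁⟩ := h₁.2 (ε / 2) (half_pos hε)
  obtain ⟨A₂, hA₂, hb₂⟩ := h₂.2 (ε / 2) (half_pos hε)
  refine ⟨A₁ + A₂, add_nonneg hA₁ hA₂, fun x y => ?_⟩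
  calc |ζ₁ (x, y) + ζ₂ (x, y)| ≤ |ζ₁ (x, y)| + |ζ₂ (x, y)| := abs_add_le _ _
    _ ≤ A₁ * (1 + ‖x‖ ^ p) + ε / 2 * ‖y‖ ^ q + (A₂ * (1 + ‖x‖ ^ p) + ε / 2 * ‖y‖ ^ q) :=
      add_le_add (hb₁ x y) (hb₂ x y)
    _ = (A₁ + A₂) * (1 + ‖x‖ ^ p) + ε * ‖y‖ ^ q := by ring

lemma MemCsw.const_mul (c : ℝ) (h : MemCsw p q ζ) : MemCsw p q fun z => c * ζ z := by
  refine ⟨fun x x₀ y y₀ hx hy => (h.1 x x₀ y y₀ hx hy).const_mul c, fun ε hε => ?_⟩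
  obtain ⟨A, hA, hb⟩ := h.2 (ε / (|c| + 1)) (by positivity)
  have hcδ : |c| * (ε / (|c| + 1)) ≤ ε := by
    rw [mul_div_assoc', div_le_iff₀ (by positivity)]
    nlinarith
  refine ⟨|c| * A, by positivity, fun x y => ?_⟩
  calc |c * ζ (x, y)| = |c| * |ζ (x, y)| := abs_mul _ _
    _ ≤ |c| * (A * (1 + ‖x‖ ^ p) + ε / (|c| + 1) * ‖y‖ ^ q) := by gcongr; exact hb x y
    _ = |c| * A * (1 + ‖x‖ ^ p) + |c| * (ε / (|c| + 1)) * ‖y‖ ^ q := by ring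
    _ ≤ |c| * A * (1 + ‖x‖ ^ p) + ε * ‖y‖ ^ q := by gcongr

lemma MemCsw.sub (h₁ : MemCsw p q ζ₁) (h₂ : MemCsw p q ζ₂) :
    MemCsw p q fun z => ζ₁ z - ζ₂ z := by
  simpa only [neg_one_mul, ← sub_eq_add_neg] using h₁.add (h₂.const_mul (-1))

lemma MemCsw.abs_le_CswNorm_mul (h : MemCsw p q ζ) (z : X × Y) :
    |ζ z| ≤ CswNorm p q ζ * (1 + ‖z.1‖ ^ p + ‖z.2‖ ^ q) := by
  obtain ⟨A, hA, hb⟩ := h.2 1 one_pos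
  refine abs_le_weightedSup_mul (csw_weight_pos p q) (C := A + 1) (fun z => ?_) z
  have := Real.rpow_nonneg (norm_nonneg z.1) p
  have := Real.rpow_nonneg (norm_nonneg z.2) q
  nlinarith [hb z.1 z.2]

lemma memCsw_of_weighted_uniform (hp : 0 ≤ p) (hq : 0 ≤ q) {ζ : ℕ → X × Y → ℝ}
    {ζlim : X × Y → ℝ} (hmem : ∀ n, MemCsw p q (ζ n))
    (hlim : ∀ ε > 0, ∀ᶠ n in atTop, ∀ z,
      |ζ n z - ζlim z| ≤ ε * (1 + ‖z.1‖ ^ p + ‖z.2‖ ^ q)) :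
    MemCsw p q ζlim := by
  refine ⟨fun x x₀ y y₀ hx hy => ?_, fun ε hε => ?_⟩
  · obtain ⟨B, hB⟩ := exists_csw_weight_le hp hq hx.norm.bddAbove_range
      hy.bddAbove_range_norm
    exact tendsto_comp_of_weighted (z := fun k => (x k, y k)) hlim hB
      fun n => (hmem n).1 x x₀ y y₀ hx hy
  · obtain ⟨N, hN⟩ := (hlim (ε / 2) (half_pos hε)).exists
    obtain ⟨A, hA, hb⟩ := (hmem N).2 (ε / 2) (half_pos hε)
    refine ⟨A + ε / 2, by positivity, fun x y => ?_⟩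
    calc |ζlim (x, y)| ≤ |ζ N (x, y)| + |ζ N (x, y) - ζlim (x, y)| := by
          simpa only [Real.norm_eq_abs] using norm_le_norm_add_norm_sub (ζ N (x, y)) (ζlim (x, y))
      _ ≤ A * (1 + ‖x‖ ^ p) + ε / 2 * ‖y‖ ^ q + ε / 2 * (1 + ‖x‖ ^ p + ‖y‖ ^ q) :=
        add_le_add (hb x y) (hN (x, y))
      _ = (A + ε / 2) * (1 + ‖x‖ ^ p) + ε * ‖y‖ ^ q := by ring

end Csw

theorem Csw_banach_general
    {X Y : Type*} [NormedAddCommGroup X] [NormedSpace ℝ X]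
    [NormedAddCommGroup Y] [NormedSpace ℝ Y]
    (p q : ℝ) (hp : 1 ≤ p) (hq : 1 < q) :
    -- `C_{pq}^{sw}` is a linear subspace:
    (∀ ζ₁ ζ₂ : X × Y → ℝ, MemCsw p q ζ₁ → MemCsw p q ζ₂ →
        MemCsw p q (fun z => ζ₁ z + ζ₂ z)) ∧
    (∀ (c : ℝ) (ζ : X × Y → ℝ), MemCsw p q ζ → MemCsw p q (fun z => c * ζ z)) ∧
    -- it is complete with respect to the norm `CswNorm`:
    (∀ ζ : ℕ → X × Y → ℝ, (∀ n, MemCsw p q (ζ n)) →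
      (∀ ε : ℝ, 0 < ε → ∃ N : ℕ, ∀ m ≥ N, ∀ n ≥ N,
          CswNorm p q (fun z => ζ m z - ζ n z) ≤ ε) →
      ∃ ζlim : X × Y → ℝ, MemCsw p q ζlim ∧
        Tendsto (fun n => CswNorm p q (fun z => ζ n z - ζlim z)) atTop (𝓝 0)) := by
  refine ⟨fun _ _ => MemCsw.add, fun c _ => MemCsw.const_mul c, fun ζ hmem hCauchy => ?_⟩
  have hweighted : ∀ ε > 0, ∃ N, ∀ m ≥ N, ∀ n ≥ N, ∀ z,
      |ζ m z - ζ n z| ≤ ε * (1 + ‖z.1‖ ^ p + ‖z.2‖ ^ q) := fun ε hε =>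
    (hCauchy ε hε).imp fun N hN m hm n hn z =>
      ((hmem m).sub (hmem n)).abs_le_CswNorm_mul z |>.trans <|
        mul_le_mul_of_nonneg_right (hN m hm n hn) (csw_weight_pos p q z).le
  obtain ⟨ζlim, hlim⟩ := exists_weighted_uniform_limit hweighted
  exact ⟨ζlim, memCsw_of_weighted_uniform (zero_le_one.trans hp) (zero_le_one.trans hq.le)
    hmem hlim, tendsto_CswNorm_sub_of_weighted_uniform hlim⟩

theorem Csw_banach
    {X Y : Type*} [NormedAddCommGroup X] [NormedSpace ℝ X]
    [TopologicalSpace.SeparableSpace X]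
    [NormedAddCommGroup Y] [NormedSpace ℝ Y]
    [TopologicalSpace.SeparableSpace Y]
    (hrefl : Function.Surjective (NormedSpace.inclusionInDoubleDual ℝ Y))
    (p q : ℝ) (hp : 1 ≤ p) (hq : 1 < q) :
    -- `C_{pq}^{sw}` is a linear subspace:
    (∀ ζ₁ ζ₂ : X × Y → ℝ, MemCsw p q ζ₁ → MemCsw p q ζ₂ →
        MemCsw p q (fun z => ζ₁ z + ζ₂ z)) ∧
    (∀ (c : ℝ) (ζ : X × Y → ℝ), MemCsw p q ζ → MemCsw p q (fun z => c * ζ z)) ∧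
    -- it is complete with respect to the norm `CswNorm`:
    (∀ ζ : ℕ → X × Y → ℝ, (∀ n, MemCsw p q (ζ n)) →
      (∀ ε : ℝ, 0 < ε → ∃ N : ℕ, ∀ m ≥ N, ∀ n ≥ N,
          CswNorm p q (fun z => ζ m z - ζ n z) ≤ ε) →
      ∃ ζlim : X × Y → ℝ, MemCsw p q ζlim ∧
        Tendsto (fun n => CswNorm p q (fun z => ζ n z - ζlim z)) atTop (𝓝 0)) :=
  Csw_banach_general p q hp hq
end

section
/- Let 𝕐 be a reflexive separable Banach space and q ∈ (1,∞). If a sequence (μ_n) of Borel probability measures on 𝕐 with finite q-th moments converges to μ narrowly with respect to the weak topology of 𝕐 (i.e. ∫ f dμ_n → ∫ f dμ for every bounded sequentially weakly continuous f) and sup_n ∫ ‖y‖^q dμ_n < ∞, then ∫ ζ dμ_n → ∫ ζ dμ for every sequentially weakly continuous ζ : 𝕐 → ℝ with lim_{‖y‖→∞} ζ(y)/(1 + ‖y‖^q) = 0. -/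
open MeasureTheory Filter Topology ENNReal

/-- A sequentially weakly continuous real function. -/
def SeqWeakCont {Y : Type*} [NormedAddCommGroup Y] [NormedSpace ℝ Y]
    (f : Y → ℝ) : Prop :=
  ∀ (y : ℕ → Y) (y₀ : Y), WeakSeqTendsto y y₀ →
    Tendsto (fun k => f (y k)) atTop (𝓝 (f y₀))

/-! Clipping `ζ` to `[-A, A]` gives a bounded sequentially weakly continuous function, to which
narrow convergence applies. Choosing `A` from the growth condition with slope `δ`, the clipping
error is at most `δ ∫ ‖y‖^q`, which the uniform moment bound makes small uniformly in `n`. -/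

namespace SeqWeakCont

variable {Y : Type*} [NormedAddCommGroup Y] [NormedSpace ℝ Y] {f : Y → ℝ}

theorem continuous (hf : SeqWeakCont f) : Continuous f :=
  continuous_iff_seqContinuous.2 fun {_ _} hy =>
    hf _ _ fun L => (L.continuous.tendsto _).comp hy

theorem comp (hf : SeqWeakCont f) {g : ℝ → ℝ} (hg : Continuous g) : SeqWeakCont (g ∘ f) :=
  fun y y₀ hy => (hg.tendsto _).comp (hf y y₀ hy)

end SeqWeakCont

def clip (A t : ℝ) : ℝ := max (min t A) (-A)

theorem continuous_clip (A : ℝ) : Continuous (clip A) :=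
  (continuous_id.min continuous_const).max continuous_const

theorem abs_clip_le {A : ℝ} (hA : 0 ≤ A) (t : ℝ) : |clip A t| ≤ A := by
  unfold clip
  rw [abs_le]
  constructor
  · exact le_max_right _ _
  · exact max_le (min_le_right _ _) (by linarith)

theorem abs_sub_clip_le {A c t : ℝ} (hc : 0 ≤ c) (h : |t| ≤ A + c) : |t - clip A t| ≤ c := by
  unfold clip
  rw [abs_le] at h ⊢
  constructor <;> cases max_cases (min t A) (-A) <;> cases min_cases t A <;> linarith

theorem tendsto_of_forall_approx {ι X : Type*} [PseudoMetricSpace X] {l : Filter ι}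
    {x : ι → X} {a : X}
    (h : ∀ ε > 0, ∃ (y : ι → X) (b : X),
      Tendsto y l (𝓝 b) ∧ (∀ i, dist (x i) (y i) ≤ ε) ∧ dist a b ≤ ε) :
    Tendsto x l (𝓝 a) := by
  refine Metric.tendsto_nhds.2 fun ε hε => ?_
  obtain ⟨y, b, hyb, hxy, hab⟩ := h (ε / 3) (by positivity)
  filter_upwards [Metric.tendsto_nhds.1 hyb (ε / 3) (by positivity)] with i hi
  calc dist (x i) a ≤ dist (x i) (y i) + dist (y i) b + dist b a := dist_triangle4 _ _ _ _
    _ < ε := by linarith [hxy i, dist_comm a b]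

section Moments

variable {Y : Type*} [NormedAddCommGroup Y] [MeasurableSpace Y] [OpensMeasurableSpace Y]
  {ν : Measure Y} {q : ℝ}

theorem integrable_rpow_norm_of_lintegral_lt_top
    (h : ∫⁻ y, ENNReal.ofReal (‖y‖ ^ q) ∂ν < ⊤) : Integrable (fun y => ‖y‖ ^ q) ν :=
  ⟨(measurable_norm.pow_const q).aestronglyMeasurable,
    (hasFiniteIntegral_iff_ofReal (ae_of_all _ fun y => by positivity)).2 h⟩

theorem integral_rpow_norm_le_toReal {C : ℝ≥0∞} (hC : C ≠ ⊤)
    (h : ∫⁻ y, ENNReal.ofReal (‖y‖ ^ q) ∂ν ≤ C) : ∫ y, ‖y‖ ^ q ∂ν ≤ C.toReal := by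
  rw [integral_eq_lintegral_of_nonneg_ae (ae_of_all _ fun y => by positivity)
    (measurable_norm.pow_const q).aestronglyMeasurable]
  exact ENNReal.toReal_mono hC h

end Moments

theorem abs_integral_sub_integral_clip_le {Y : Type*} [MeasurableSpace Y] {ν : Measure Y}
    [IsFiniteMeasure ν] {f m : Y → ℝ} (hf : AEStronglyMeasurable f ν) (hm : Integrable m ν)
    (hm₀ : ∀ y, 0 ≤ m y) {A δ : ℝ} (hA : 0 ≤ A) (hδ : 0 ≤ δ)
    (hfA : ∀ y, |f y| ≤ A + δ * m y) :
    |∫ y, f y ∂ν - ∫ y, clip A (f y) ∂ν| ≤ δ * ∫ y, m y ∂ν := by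
  have hf_int : Integrable f ν :=
    ((integrable_const A).add (hm.const_mul δ)).mono' hf (ae_of_all _ hfA)
  have hclip_int : Integrable (fun y => clip A (f y)) ν :=
    (integrable_const A).mono' ((continuous_clip A).comp_aestronglyMeasurable hf)
      (ae_of_all _ fun y => abs_clip_le hA (f y))
  rw [← integral_sub hf_int hclip_int, ← integral_const_mul]
  exact norm_integral_le_of_norm_le (f := fun y => f y - clip A (f y)) (hm.const_mul δ)
    (ae_of_all _ fun y => abs_sub_clip_le (mul_nonneg hδ (hm₀ y)) (hfA y))

theorem convergence_in_Pqw_general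
    {Y : Type*} [NormedAddCommGroup Y] [NormedSpace ℝ Y]
    [MeasurableSpace Y] [BorelSpace Y]
    (q : ℝ)
    (μs : ℕ → Measure Y) (μ : Measure Y)
    (hprob : ∀ n, IsProbabilityMeasure (μs n)) [IsProbabilityMeasure μ]
    (hmomμ : ∫⁻ y, ENNReal.ofReal (‖y‖ ^ q) ∂μ < ⊤)
    (hnarrow : ∀ f : Y → ℝ, SeqWeakCont f → (∃ C : ℝ, ∀ y, |f y| ≤ C) →
        Tendsto (fun n => ∫ y, f y ∂(μs n)) atTop (𝓝 (∫ y, f y ∂μ)))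
    (hbdd : ∃ C : ℝ≥0∞, C ≠ ⊤ ∧ ∀ n, ∫⁻ y, ENNReal.ofReal (‖y‖ ^ q) ∂(μs n) ≤ C) :
    ∀ ζ : Y → ℝ, SeqWeakCont ζ →
      (∀ ε : ℝ, 0 < ε → ∃ A : ℝ, 0 ≤ A ∧ ∀ y, |ζ y| ≤ A + ε * ‖y‖ ^ q) →
      Tendsto (fun n => ∫ y, ζ y ∂(μs n)) atTop (𝓝 (∫ y, ζ y ∂μ)) := by
  intro ζ hζ hgrow
  obtain ⟨C, hC, hμsC⟩ := hbdd
  set M := max C.toReal (∫ y, ‖y‖ ^ q ∂μ)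
  have hM : 0 ≤ M := le_max_of_le_left ENNReal.toReal_nonneg
  refine tendsto_of_forall_approx fun ε hε => ?_
  obtain ⟨A, hA, hζA⟩ := hgrow (ε / (M + 1)) (by positivity)
  have hclip : ∀ (ν : Measure Y) [IsFiniteMeasure ν], Integrable (fun y => ‖y‖ ^ q) ν →
      ∫ y, ‖y‖ ^ q ∂ν ≤ M → dist (∫ y, ζ y ∂ν) (∫ y, clip A (ζ y) ∂ν) ≤ ε := by
    intro ν _ hint hle
    calc dist (∫ y, ζ y ∂ν) (∫ y, clip A (ζ y) ∂ν)
        ≤ ε / (M + 1) * ∫ y, ‖y‖ ^ q ∂ν :=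
          abs_integral_sub_integral_clip_le hζ.continuous.aestronglyMeasurable hint
            (fun y => by positivity) hA (by positivity) hζA
      _ ≤ ε / (M + 1) * (M + 1) := by gcongr; linarith
      _ = ε := div_mul_cancel₀ ε (by positivity)
  refine ⟨_, _, hnarrow _ (hζ.comp (continuous_clip A)) ⟨A, fun y => abs_clip_le hA _⟩,
    fun n => ?_, hclip μ (integrable_rpow_norm_of_lintegral_lt_top hmomμ) (le_max_right _ _)⟩
  have := hprob n
  exact hclip (μs n) (integrable_rpow_norm_of_lintegral_lt_top ((hμsC n).trans_lt hC.lt_top))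
    ((integral_rpow_norm_le_toReal hC (hμsC n)).trans (le_max_left _ _))

theorem convergence_in_Pqw
    {Y : Type*} [NormedAddCommGroup Y] [NormedSpace ℝ Y]
    [TopologicalSpace.SeparableSpace Y] [MeasurableSpace Y] [BorelSpace Y]
    (hrefl : Function.Surjective (NormedSpace.inclusionInDoubleDual ℝ Y))
    (q : ℝ) (hq : 1 < q)
    (μs : ℕ → Measure Y) (μ : Measure Y)
    (hprob : ∀ n, IsProbabilityMeasure (μs n)) [IsProbabilityMeasure μ]
    (hmomμ : ∫⁻ y, ENNReal.ofReal (‖y‖ ^ q) ∂μ < ⊤)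
    (hnarrow : ∀ f : Y → ℝ, SeqWeakCont f → (∃ C : ℝ, ∀ y, |f y| ≤ C) →
        Tendsto (fun n => ∫ y, f y ∂(μs n)) atTop (𝓝 (∫ y, f y ∂μ)))
    (hbdd : ∃ C : ℝ≥0∞, C ≠ ⊤ ∧ ∀ n, ∫⁻ y, ENNReal.ofReal (‖y‖ ^ q) ∂(μs n) ≤ C) :
    ∀ ζ : Y → ℝ, SeqWeakCont ζ →
      (∀ ε : ℝ, 0 < ε → ∃ A : ℝ, 0 ≤ A ∧ ∀ y, |ζ y| ≤ A + ε * ‖y‖ ^ q) →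
      Tendsto (fun n => ∫ y, ζ y ∂(μs n)) atTop (𝓝 (∫ y, ζ y ∂μ)) :=
  convergence_in_Pqw_general q μs μ hprob hmomμ hnarrow hbdd
end
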